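/- Let n ≥ 1 and let q = P_{2n} (an even Pell number). Then S_{q/2 + k}(2√2) = S_{q/2}(2√2) − S_k(2√2) for all integers k with 0 ≤ k ≤ q/2. -/

import Mathlib

/-- The deterministic random walk `S_n(ξ) = ∑_{j=1}^n (-1)^⌊j·ξ⌋`. -/
noncomputable def S (ξ : ℝ) (n : ℕ) : ℤ :=
  ∑ j ∈ Finset.Icc 1 n, ((Int.negOnePow ⌊(j : ℝ) * ξ⌋ : ℤˣ) : ℤ)

/-- The Pell numbers: `P 0 = 0`, `P 1 = 1`, `P (n+2) = 2·P (n+1) + P n`. -/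
def pell : ℕ → ℕ
  | 0 => 0
  | 1 => 1
  | n + 2 => 2 * pell (n + 1) + pell n

/-! Write `q = P_{2n}` and let `H` be the half-companion Pell number, so `H² = 2q² + 1`.
For `1 ≤ j ≤ q/2` we have `(q/2 + j)·2√2 = 2j√2 + q√2`, where `q√2` lies just below the integer `H`
by less than the fractional part of `2j√2`. Hence the floor grows by exactly `H`, which is odd, so
step `q/2 + j` of the walk is the negative of step `j`. -/

def halfCompanionPell : ℕ → ℕ
  | 0 => 1
  | m + 1 => halfCompanionPell m + 2 * pell m

lemma pell_succ_eq_halfCompanionPell_add (m : ℕ) :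
    pell (m + 1) = halfCompanionPell m + pell m := by
  induction m with
  | zero => rfl
  | succ m ih => rw [pell, halfCompanionPell]; omega

lemma halfCompanionPell_odd (m : ℕ) : Odd (halfCompanionPell m) := by
  induction m with
  | zero => exact odd_one
  | succ m ih => rw [halfCompanionPell]; exact ih.add_even (even_two_mul _)

lemma pell_mod_two (m : ℕ) : pell m % 2 = m % 2 := by
  induction m with
  | zero => rfl
  | succ m ih =>
    rw [pell_succ_eq_halfCompanionPell_add]
    have := Nat.odd_iff.mp (halfCompanionPell_odd m)
    omega

lemma halfCompanionPell_sq (m : ℕ) :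
    (halfCompanionPell m : ℤ) ^ 2 = 2 * (pell m : ℤ) ^ 2 + (-1) ^ m := by
  induction m with
  | zero => norm_num [halfCompanionPell, pell]
  | succ m ih =>
    rw [pell_succ_eq_halfCompanionPell_add, halfCompanionPell]
    push_cast
    linear_combination -ih

lemma halfCompanionPell_even_sq (n : ℕ) :
    halfCompanionPell (2 * n) ^ 2 = 2 * pell (2 * n) ^ 2 + 1 := by
  have := halfCompanionPell_sq (2 * n)
  rw [pow_mul, neg_one_sq, one_pow] at this
  exact_mod_cast this

/- With `m = ⌊a√2⌋`: `H - q√2 = 1 / (H + q√2)` is smaller than `a√2 - m = (2a² - m²) / (a√2 + m)`,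
since `2a² - m² ≥ 1` and `a√2 + m < q√2 + H`. -/
lemma floor_add_mul_sqrt_two {H q a : ℕ} (hH : H ^ 2 = 2 * q ^ 2 + 1) (ha : 0 < a)
    (haq : a ≤ q) : ⌊((a : ℝ) + q) * √2⌋ = ⌊(a : ℝ) * √2⌋ + H := by
  have hs2 : √2 ^ 2 = 2 := Real.sq_sqrt zero_le_two
  have hs0 : 0 < √2 := by positivity
  have hHR : (H : ℝ) ^ 2 = 2 * (q : ℝ) ^ 2 + 1 := by exact_mod_cast hH
  have haqR : (a : ℝ) ≤ q := by exact_mod_cast haq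
  set m := ⌊(a : ℝ) * √2⌋
  have hm0 : (0 : ℝ) ≤ m := by exact_mod_cast Int.floor_nonneg.mpr (by positivity)
  have hm_lt : (m : ℝ) < a * √2 := (Int.floor_le _).lt_of_ne fun h =>
    (irrational_sqrt_two.natCast_mul ha.ne').ne_int m h.symm
  have hm_up : (a : ℝ) * √2 < m + 1 := Int.lt_floor_add_one _
  have hnorm : (m : ℝ) ^ 2 + 1 ≤ 2 * (a : ℝ) ^ 2 := by
    have hR : (m : ℝ) ^ 2 < 2 * (a : ℝ) ^ 2 := by nlinarith
    have hZ : m ^ 2 < 2 * (a : ℤ) ^ 2 := by exact_mod_cast hR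
    exact_mod_cast Int.add_one_le_iff.mpr hZ
  have hqH : (q : ℝ) * √2 < H := by nlinarith [Nat.cast_nonneg (α := ℝ) H]
  have hfract : (H : ℝ) - q * √2 < a * √2 - m := by
    nlinarith [mul_le_mul_of_nonneg_left haqR hs0.le]
  rw [Int.floor_eq_iff]
  push_cast
  constructor <;> nlinarith

lemma S_succ (ξ : ℝ) (n : ℕ) :
    S ξ (n + 1) = S ξ n + ((Int.negOnePow ⌊((n + 1 : ℕ) : ℝ) * ξ⌋ : ℤˣ) : ℤ) :=
  Finset.sum_Icc_succ_top (Nat.le_add_left 1 n) _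

lemma S_add_eq_sub_of_negOnePow_floor_add {ξ : ℝ} {m k : ℕ}
    (h : ∀ j, 1 ≤ j → j ≤ k →
      Int.negOnePow ⌊((m + j : ℕ) : ℝ) * ξ⌋ = -Int.negOnePow ⌊(j : ℝ) * ξ⌋) :
    S ξ (m + k) = S ξ m - S ξ k := by
  induction k with
  | zero => simp [S]
  | succ k ih =>
    have hstep := h (k + 1) (by omega) le_rfl
    rw [← add_assoc] at hstep ⊢
    rw [S_succ, S_succ, ih fun j h1 h2 => h j h1 (by omega), hstep]
    push_cast
    ring

lemma floor_add_mul_two_sqrt_two {H q h j : ℕ} (hH : H ^ 2 = 2 * q ^ 2 + 1) (hq : 2 * h = q)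
    (hj : 0 < j) (hjh : j ≤ h) :
    ⌊((h + j : ℕ) : ℝ) * (2 * √2)⌋ = ⌊(j : ℝ) * (2 * √2)⌋ + H := by
  subst hq
  have hsum : ((h + j : ℕ) : ℝ) * (2 * √2) = (((2 * j : ℕ) : ℝ) + (2 * h : ℕ)) * √2 := by
    push_cast; ring
  have hj2 : (j : ℝ) * (2 * √2) = ((2 * j : ℕ) : ℝ) * √2 := by push_cast; ring
  rw [hsum, hj2]
  exact floor_add_mul_sqrt_two hH (by omega) (by omega)

theorem stmt_14_general (n : ℕ) (k : ℕ) (hk : k ≤ pell (2 * n) / 2) :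
    S (2 * Real.sqrt 2) (pell (2 * n) / 2 + k) =
      S (2 * Real.sqrt 2) (pell (2 * n) / 2) - S (2 * Real.sqrt 2) k := by
  have hq : 2 * (pell (2 * n) / 2) = pell (2 * n) := by
    have := pell_mod_two (2 * n)
    omega
  apply S_add_eq_sub_of_negOnePow_floor_add
  intro j hj hjk
  rw [floor_add_mul_two_sqrt_two (halfCompanionPell_even_sq n) hq hj (hjk.trans hk),
    Int.negOnePow_add, Int.negOnePow_odd _ (halfCompanionPell_odd (2 * n)).natCast,
    mul_neg_one]

theorem stmt_14 (n : ℕ) (hn : 1 ≤ n) (k : ℕ) (hk : k ≤ pell (2 * n) / 2) :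
    S (2 * Real.sqrt 2) (pell (2 * n) / 2 + k) =
      S (2 * Real.sqrt 2) (pell (2 * n) / 2) - S (2 * Real.sqrt 2) k :=
  stmt_14_general n k hk
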